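/- arXiv:2004.07262 — 5 statements merged into one kernel-verified Lean document; each statement's English description precedes it below -/
import Mathlib

section
/- Let A ∈ ℤ^{d×n} be full and pointed with all columns nonzero. A prime ideal P of ℂ[x₁,…,xₙ] is A-graded and contains the toric ideal I_A if and only if P = I_A^τ for some face τ of the cone ℝ≥0A; moreover distinct faces τ ≠ τ′ give distinct ideals I_A^τ ≠ I_A^{τ′}. Hence the faces of ℝ≥0A are in one-to-one correspondence with the A-graded prime ideals of ℂ[x₁,…,xₙ] containing I_A. -/
open MvPolynomial

/-- The `j`-th column of the integer matrix `A`. -/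
def matCol {d n : ℕ} (A : Matrix (Fin d) (Fin n) ℤ) (j : Fin n) : Fin d → ℤ := fun i => A i j

/-- The semigroup `ℕA ⊆ ℤ^d` generated by the columns of `A`. -/
def semigroupNA {d n : ℕ} (A : Matrix (Fin d) (Fin n) ℤ) : Set (Fin d → ℤ) :=
  {v | ∃ c : Fin n → ℕ, v = ∑ j, c j • matCol A j}

/-- `A` is full: the columns generate all of `ℤ^d` as a group. -/
def IsFull {d n : ℕ} (A : Matrix (Fin d) (Fin n) ℤ) : Prop :=
  ∀ v : Fin d → ℤ, ∃ c : Fin n → ℤ, v = ∑ j, c j • matCol A j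

/-- `A` is pointed: the only unit of the semigroup `ℕA` is `0`. -/
def IsPointed {d n : ℕ} (A : Matrix (Fin d) (Fin n) ℤ) : Prop :=
  ∀ v ∈ semigroupNA A, -v ∈ semigroupNA A → v = 0

/-- The `j`-th column of `A`, viewed in `ℝ^d`. -/
def matColR {d n : ℕ} (A : Matrix (Fin d) (Fin n) ℤ) (j : Fin n) : Fin d → ℝ :=
  fun i => (A i j : ℝ)

/-- A face of the cone `ℝ≥0 A`, identified with the subset of column indices
on which some nonnegative supporting linear functional vanishes. -/
def IsFace {d n : ℕ} (A : Matrix (Fin d) (Fin n) ℤ) (τ : Set (Fin n)) : Prop :=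
  ∃ φ : (Fin d → ℝ) →ₗ[ℝ] ℝ, (∀ j, 0 ≤ φ (matColR A j)) ∧ τ = {j | φ (matColR A j) = 0}

/-- The toric ideal `I_A ⊆ ℂ[x₁,…,xₙ]`, generated by the binomials
`x^{u₊} - x^{u₋}` for `u` in the integer kernel of `A`. -/
noncomputable def toricIdeal {d n : ℕ} (A : Matrix (Fin d) (Fin n) ℤ) :
    Ideal (MvPolynomial (Fin n) ℂ) :=
  Ideal.span {p | ∃ u : Fin n → ℤ, (∀ i, ∑ j, A i j * u j = 0) ∧
    p = monomial (Finsupp.equivFunOnFinite.symm fun j => (u j).toNat) 1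
      - monomial (Finsupp.equivFunOnFinite.symm fun j => (-u j).toNat) 1}

/-- The ideal `I_A^τ`, generated by `I_A` together with the variables `x_j`, `j ∉ τ`. -/
noncomputable def toricFaceIdeal {d n : ℕ} (A : Matrix (Fin d) (Fin n) ℤ) (τ : Set (Fin n)) :
    Ideal (MvPolynomial (Fin n) ℂ) :=
  toricIdeal A ⊔ Ideal.span {p | ∃ j ∉ τ, p = X j}

/-- The `A`-degree of an exponent vector: `deg x_j = a_j`. -/
def adeg {d n : ℕ} (A : Matrix (Fin d) (Fin n) ℤ) (e : Fin n →₀ ℕ) : Fin d → ℤ :=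
  fun i => ∑ j, (e j : ℤ) * A i j

open Classical in
/-- The `A`-graded component of a polynomial `p` in `A`-degree `b`. -/
noncomputable def gradePiece {d n : ℕ} (A : Matrix (Fin d) (Fin n) ℤ)
    (p : MvPolynomial (Fin n) ℂ) (b : Fin d → ℤ) : MvPolynomial (Fin n) ℂ :=
  ∑ e ∈ p.support.filter (fun e => adeg A e = b), monomial e (coeff e p)

/-- An ideal is `A`-graded if it contains all `A`-graded components of its elements. -/
def IsAGraded {d n : ℕ} (A : Matrix (Fin d) (Fin n) ℤ)
    (P : Ideal (MvPolynomial (Fin n) ℂ)) : Prop :=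
  ∀ p ∈ P, ∀ b : Fin d → ℤ, gradePiece A p b ∈ P

/-!
For a prime `P ⊇ I_A` put `τ = {j | x_j ∉ P}`. If `u ∈ ker A` is nonnegative off `τ` with
`u_j > 0` for some `j ∉ τ`, then `x^{u₊} ∈ P`, so the binomial `x^{u₊} - x^{u₋}` puts `x^{u₋}` and
hence some `x_k` with `u_k < 0` into `P`, although `k ∉ τ`. So every `u ∈ ker A` that is nonnegative
off `τ` vanishes off `τ`, and a theorem of the alternative (Farkas' lemma over `ℚ`, after clearing
denominators) turns this into a supporting functional cutting out `τ`.

If `P` is also `A`-graded it is generated by homogeneous elements `q`. The monomials of `q` that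
involve some `x_j`, `j ∉ τ`, lie in `I_A^τ`; the others all have the same `A`-degree, so modulo `I_A`
they add up to `c • x^{e₀}` with `x^{e₀} ∉ P`, forcing `c = 0`. Hence `P = I_A^τ`.

Conversely, for a face `τ`, evaluation at the indicator vector of `τ` kills `I_A^τ`, because `u₊` is
supported in `τ` exactly when `u₋` is; thus `x_j ∉ I_A^τ` for `j ∈ τ`, and `τ` is recovered from
`I_A^τ`.
-/

open Matrix

theorem Finset.exists_nonneg_sum_insert_eq {R M ι : Type*} [Semiring R] [PartialOrder R]
    [AddCommMonoid M] [Module R M] [DecidableEq ι] {s : Finset ι} {k : ι} (hk : k ∉ s)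
    (b : ι → M) {l : ι → R} (hl : ∀ i ∈ s, 0 ≤ l i) {μ : R} (hμ : 0 ≤ μ) :
    ∃ l' : ι → R, (∀ i ∈ insert k s, 0 ≤ l' i) ∧
      ∑ i ∈ insert k s, l' i • b i = ∑ i ∈ s, l i • b i + μ • b k := by
  have hupdate : ∀ i ∈ s, Function.update l k μ i = l i := fun i hi =>
    Function.update_of_ne (ne_of_mem_of_not_mem hi hk) _ _
  refine ⟨Function.update l k μ, ?_, ?_⟩
  · simp only [Finset.mem_insert, forall_eq_or_imp, Function.update_self]
    exact ⟨hμ, fun i hi => hupdate i hi ▸ hl i hi⟩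
  · rw [Finset.sum_insert hk, Function.update_self, add_comm,
      Finset.sum_congr rfl fun i hi => by rw [hupdate i hi]]

section Farkas

variable {𝕜 V ι : Type*} [Field 𝕜] [LinearOrder 𝕜] [IsStrictOrderedRing 𝕜]
  [AddCommGroup V] [Module 𝕜 V]

theorem Finset.exists_dual_neg_of_not_exists_nonneg_sum_eq [DecidableEq ι] (s : Finset ι)
    (b : ι → V) (c : V) (h : ¬ ∃ l : ι → 𝕜, (∀ i ∈ s, 0 ≤ l i) ∧ ∑ i ∈ s, l i • b i = c) :
    ∃ f : Module.Dual 𝕜 V, (∀ i ∈ s, 0 ≤ f (b i)) ∧ f c < 0 := by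
  induction s using Finset.induction_on generalizing b c with
  | empty =>
    have hc : c ≠ 0 := fun hc => h ⟨0, by simp, by simp [hc]⟩
    obtain ⟨f, hf⟩ := Module.Projective.exists_dual_ne_zero 𝕜 hc
    rcases hf.lt_or_gt with hneg | hpos
    · exact ⟨f, by simp, hneg⟩
    · exact ⟨-f, by simp, by simpa using hpos⟩
  | insert k s hk ih =>
    have extend : ∀ l : ι → 𝕜, (∀ i ∈ s, 0 ≤ l i) → ∀ μ : 𝕜, 0 ≤ μ →
        ∑ i ∈ s, l i • b i + μ • b k ≠ c := fun l hl μ hμ hc =>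
      h (hc ▸ Finset.exists_nonneg_sum_insert_eq hk b hl hμ)
    obtain ⟨f, hfs, hfc⟩ := ih b c fun ⟨l, hl, hlc⟩ => extend l hl 0 le_rfl (by simpa using hlc)
    by_cases hfk : 0 ≤ f (b k)
    · exact ⟨f, by simpa [hfk] using hfs, hfc⟩
    replace hfk := not_le.mp hfk
    -- project along `b k` onto `ker f`; a certificate for the projected family pulls back
    set π : V →ₗ[𝕜] V := LinearMap.id - (f (b k))⁻¹ • f.smulRight (b k) with hπ
    have hπ_add : ∀ v, v = π v + (f v / f (b k)) • b k := fun v => by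
      simp [hπ, div_eq_inv_mul, smul_smul]
    have hπk : π (b k) = 0 := by simp [hπ, smul_smul, hfk.ne]
    obtain ⟨g, hgs, hgc⟩ := ih (π ∘ b) (π c) <| by
      rintro ⟨l, hl, hlc⟩
      set y := ∑ i ∈ s, l i • b i
      have hπy : π (c - y) = 0 := by simp [y, map_sum, ← hlc]
      have hfy : f (c - y) < 0 := by
        have : 0 ≤ f y := by
          simp only [y, map_sum, map_smul, smul_eq_mul]
          exact Finset.sum_nonneg fun i hi => mul_nonneg (hl i hi) (hfs i hi)
        rw [map_sub]
        linarith
      refine extend l hl _ (div_pos_of_neg_of_neg hfy hfk).le ?_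
      have := hπ_add (c - y)
      rw [hπy, zero_add] at this
      rw [← this]
      abel
    refine ⟨g ∘ₗ π, ?_, hgc⟩
    simpa only [Finset.mem_insert, forall_eq_or_imp, LinearMap.comp_apply, hπk, map_zero, le_refl,
      true_and, Function.comp_apply] using hgs

theorem exists_dual_neg_of_not_exists_nonneg_sum_eq [Fintype ι] (b : ι → V) (c : V)
    (h : ¬ ∃ l : ι → 𝕜, (∀ i, 0 ≤ l i) ∧ ∑ i, l i • b i = c) :
    ∃ f : Module.Dual 𝕜 V, (∀ i, 0 ≤ f (b i)) ∧ f c < 0 := by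
  classical
  simpa using Finset.univ.exists_dual_neg_of_not_exists_nonneg_sum_eq b c (by simpa using h)

theorem exists_dual_nonneg_pos_of_kernel [Fintype ι] {a : ι → V} {τ : Set ι}
    (h : ∀ u : ι → 𝕜, (∀ j ∉ τ, 0 ≤ u j) → ∑ j, u j • a j = 0 → ∀ j ∉ τ, u j = 0)
    {k : ι} (hk : k ∉ τ) :
    ∃ f : Module.Dual 𝕜 V, (∀ j, 0 ≤ f (a j)) ∧ (∀ j ∈ τ, f (a j) = 0) ∧ 0 < f (a k) := by
  classical
  -- `-a k` is no combination of the `a j` with coefficients `≥ 0` off `τ`: adding `a k` would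
  -- contradict `h`
  obtain ⟨f, hf, hfk⟩ := exists_dual_neg_of_not_exists_nonneg_sum_eq
    (Sum.elim a fun j => -if j ∈ τ then a j else 0) (-a k) <| by
    rintro ⟨l, hl, hlk⟩
    set m : ι → 𝕜 := fun j => if j ∈ τ then l (.inr j) else 0
    set u : ι → 𝕜 := fun j => l (.inl j) - m j + if j = k then 1 else 0
    have hsum : ∑ j, u j • a j = 0 := by
      simp only [Fintype.sum_sum_type, Sum.elim_inl, Sum.elim_inr, smul_neg, smul_ite,
        smul_zero, Finset.sum_neg_distrib, ← sub_eq_add_neg] at hlk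
      simp only [u, m, add_smul, sub_smul, Finset.sum_add_distrib, Finset.sum_sub_distrib,
        ite_smul, zero_smul, one_smul, Finset.sum_ite_eq', Finset.mem_univ, if_true]
      rw [hlk, neg_add_cancel]
    have hnonneg : ∀ j ∉ τ, 0 ≤ u j := fun j hj => by
      have := hl (.inl j)
      simp only [u, m, hj, if_false, sub_zero]
      split_ifs <;> linarith
    have := h u hnonneg hsum k hk
    simp only [u, m, hk, if_false, if_true, sub_zero] at this
    linarith [hl (.inl k)]
  refine ⟨f, fun j => by simpa using hf (.inl j), fun j hj => ?_, by simpa using hfk⟩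
  have := hf (.inr j)
  simp only [Sum.elim_inr, hj, if_true, map_neg] at this
  exact le_antisymm (by linarith) (by simpa using hf (.inl j))

theorem exists_dual_nonneg_eq_zero_iff_of_kernel [Fintype ι] {a : ι → V} {τ : Set ι}
    (h : ∀ u : ι → 𝕜, (∀ j ∉ τ, 0 ≤ u j) → ∑ j, u j • a j = 0 → ∀ j ∉ τ, u j = 0) :
    ∃ f : Module.Dual 𝕜 V, (∀ j, 0 ≤ f (a j)) ∧ ∀ j, f (a j) = 0 ↔ j ∈ τ := by
  classical
  have hk : ∀ k, ∃ f : Module.Dual 𝕜 V, (∀ j, 0 ≤ f (a j)) ∧ (∀ j ∈ τ, f (a j) = 0) ∧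
      (k ∉ τ → 0 < f (a k)) := fun k => by
    by_cases hk : k ∈ τ
    · exact ⟨0, by simp, by simp, absurd hk⟩
    obtain ⟨f, hf⟩ := exists_dual_nonneg_pos_of_kernel h hk
    exact ⟨f, hf.1, hf.2.1, fun _ => hf.2.2⟩
  choose F hF_nonneg hF_zero hF_pos using hk
  refine ⟨∑ k, F k, fun j => ?_, fun j => ⟨fun h0 => ?_, fun hj => ?_⟩⟩
  · simpa using Finset.sum_nonneg fun k _ => hF_nonneg k j
  · by_contra hj
    have : F j (a j) ≤ ∑ k, F k (a j) :=
      Finset.single_le_sum (fun k _ => hF_nonneg k j) (Finset.mem_univ j)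
    simp only [LinearMap.sum_apply] at h0
    linarith [hF_pos j hj]
  · simp [hF_zero _ j hj]

end Farkas

theorem Rat.exists_nat_mul_eq_intCast {ι : Type*} [Fintype ι] (u : ι → ℚ) :
    ∃ N : ℕ, 0 < N ∧ ∃ v : ι → ℤ, ∀ j, (v j : ℚ) = N * u j := by
  classical
  refine ⟨∏ j, (u j).den, Finset.prod_pos fun j _ => (u j).den_pos,
    fun j => (u j).num * ∏ k ∈ Finset.univ.erase j, ((u k).den : ℤ), fun j => ?_⟩
  rw [← Finset.mul_prod_erase _ _ (Finset.mem_univ j)]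
  push_cast
  rw [← Rat.den_mul_eq_num]
  ring

theorem LinearMap.exists_real_comp_ratCast {ι : Type*} [Fintype ι] (f : (ι → ℚ) →ₗ[ℚ] ℚ) :
    ∃ φ : (ι → ℝ) →ₗ[ℝ] ℝ, ∀ x : ι → ℚ, φ (fun i => (x i : ℝ)) = f x := by
  classical
  refine ⟨∑ i, (f (Pi.single i 1) : ℝ) • LinearMap.proj i, fun x => ?_⟩
  conv_rhs => rw [pi_eq_sum_univ' x]
  simp [map_sum, mul_comm]

theorem MvPolynomial.monomial_mem_iff_of_isPrime {σ R : Type*} [CommRing R]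
    {P : Ideal (MvPolynomial σ R)} [hP : P.IsPrime] (e : σ →₀ ℕ) {c : R} (hc : IsUnit c) :
    monomial e c ∈ P ↔ ∃ j, e j ≠ 0 ∧ X j ∈ P := by
  rw [monomial_eq, Ideal.unit_mul_mem_iff_mem _ (hc.map C), Finsupp.prod,
    Ideal.IsPrime.prod_mem_iff]
  refine exists_congr fun j => ?_
  rw [Finsupp.mem_support_iff, and_congr_right_iff]
  exact fun hj => hP.pow_mem_iff_mem _ (Nat.pos_of_ne_zero hj)

open Classical in
theorem MvPolynomial.eval_indicator_monomial_one {σ R : Type*} [Fintype σ] [CommSemiring R]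
    (τ : Set σ) (e : σ →₀ ℕ) :
    eval (τ.indicator 1) (monomial e (1 : R)) = if ∀ j ∉ τ, e j = 0 then 1 else 0 := by
  rw [eval_monomial, one_mul, Finsupp.prod_pow]
  split_ifs with h
  · refine Finset.prod_eq_one fun j _ => ?_
    by_cases hj : j ∈ τ
    · simp [hj]
    · simp [h j hj]
  · push Not at h
    obtain ⟨j, hj, hej⟩ := h
    exact Finset.prod_eq_zero (Finset.mem_univ j) (by simp [hj, hej])

noncomputable def posExp {σ : Type*} [Finite σ] (u : σ → ℤ) : σ →₀ ℕ :=
  Finsupp.equivFunOnFinite.symm fun j => (u j).toNat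

@[simp] theorem posExp_apply {σ : Type*} [Finite σ] (u : σ → ℤ) (j : σ) :
    posExp u j = (u j).toNat := rfl

attribute [local instance] MvPolynomial.weightedGradedAlgebra

section Toric

variable {d n : ℕ} {A : Matrix (Fin d) (Fin n) ℤ}

theorem IsFace.eq_zero_of_mulVec_eq_zero {τ : Set (Fin n)} (hτ : IsFace A τ) {u : Fin n → ℤ}
    (hu : A *ᵥ u = 0) (hnonneg : ∀ j ∉ τ, 0 ≤ u j) : ∀ j ∉ τ, u j = 0 := by
  obtain ⟨φ, hφ, rfl⟩ := hτ
  have hsum : ∑ j, (u j : ℝ) * φ (matColR A j) = 0 := by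
    have : ∑ j, (u j : ℝ) • matColR A j = 0 := by
      ext i
      simpa [matColR, mulVec, dotProduct, mul_comm] using
        congrArg (fun z : ℤ => (z : ℝ)) (congrFun hu i)
    simpa [map_sum] using congrArg φ this
  intro j hj
  have hterm := (Finset.sum_eq_zero_iff_of_nonneg fun k _ => ?_).mp hsum j (Finset.mem_univ j)
  · exact_mod_cast (mul_eq_zero.mp hterm).resolve_right hj
  · by_cases hk : φ (matColR A k) = 0
    · simp [hk]
    · exact mul_nonneg (by exact_mod_cast hnonneg k hk) (hφ k)

theorem isFace_of_forall_mulVec_eq_zero {τ : Set (Fin n)}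
    (h : ∀ u : Fin n → ℤ, A *ᵥ u = 0 → (∀ j ∉ τ, 0 ≤ u j) → ∀ j ∉ τ, u j = 0) :
    IsFace A τ := by
  obtain ⟨f, hf_nonneg, hf_zero⟩ := exists_dual_nonneg_eq_zero_iff_of_kernel
      (a := fun j i => (A i j : ℚ)) fun u hnonneg hu j hj => by
    obtain ⟨N, hN, v, hv⟩ := Rat.exists_nat_mul_eq_intCast u
    have hAv : A *ᵥ v = 0 := by
      ext i
      have hcast : ((A *ᵥ v) i : ℚ) = N * (∑ j, u j • fun i => (A i j : ℚ)) i := by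
        simp only [mulVec, dotProduct, Int.cast_sum, Int.cast_mul, hv, Finset.sum_apply,
          Pi.smul_apply, smul_eq_mul, Finset.mul_sum]
        exact Finset.sum_congr rfl fun _ _ => by ring
      rw [hu] at hcast
      exact_mod_cast hcast.trans (mul_zero _)
    have hvj := h v hAv (fun k hk => by
      exact_mod_cast (hv k).symm ▸ mul_nonneg N.cast_nonneg (hnonneg k hk)) j hj
    have := hv j
    simp only [hvj, Int.cast_zero, zero_eq_mul, Nat.cast_eq_zero] at this
    exact this.resolve_left hN.ne'
  obtain ⟨φ, hφ⟩ := LinearMap.exists_real_comp_ratCast f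
  have hφA : ∀ j, φ (matColR A j) = f (fun i => (A i j : ℚ)) := fun j => by
    rw [← hφ]
    exact congrArg φ (funext fun i => (Rat.cast_intCast (A i j)).symm)
  refine ⟨φ, fun j => by simpa [hφA] using hf_nonneg j, ?_⟩
  ext j
  simp [hφA, hf_zero]

theorem IsFace.forall_nonpos_iff_forall_nonneg {τ : Set (Fin n)} (hτ : IsFace A τ)
    {u : Fin n → ℤ} (hu : A *ᵥ u = 0) : (∀ j ∉ τ, u j ≤ 0) ↔ ∀ j ∉ τ, 0 ≤ u j := by
  refine ⟨fun h j hj => ?_, fun h j hj => (hτ.eq_zero_of_mulVec_eq_zero hu h j hj).le⟩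
  have := hτ.eq_zero_of_mulVec_eq_zero (u := -u) (by rw [mulVec_neg, hu, neg_zero])
    (fun k hk => by simpa using h k hk) j hj
  simp only [Pi.neg_apply, neg_eq_zero] at this
  exact this.ge

theorem weight_matCol_apply (e : Fin n →₀ ℕ) (i : Fin d) :
    Finsupp.weight (matCol A) e i = ∑ j, (e j : ℤ) * A i j := by
  simp [Finsupp.weight_apply, Finsupp.sum_fintype, matCol]

theorem weight_posExp_sub_weight_posExp_neg (u : Fin n → ℤ) :
    Finsupp.weight (matCol A) (posExp u) - Finsupp.weight (matCol A) (posExp (-u)) = A *ᵥ u := by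
  ext i
  simp only [Pi.sub_apply, weight_matCol_apply, ← Finset.sum_sub_distrib, posExp_apply,
    Pi.neg_apply, mulVec, dotProduct, mul_comm _ (A i _), ← mul_sub, Int.toNat_sub_toNat_neg]

theorem binomial_mem_toricIdeal {u : Fin n → ℤ} (hu : A *ᵥ u = 0) :
    monomial (posExp u) (1 : ℂ) - monomial (posExp (-u)) 1 ∈ toricIdeal A :=
  Ideal.subset_span ⟨u, fun i => congrFun hu i, rfl⟩

theorem isWeightedHomogeneous_binomial {u : Fin n → ℤ} (hu : A *ᵥ u = 0) :
    IsWeightedHomogeneous (matCol A) (monomial (posExp u) (1 : ℂ) - monomial (posExp (-u)) 1)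
      (Finsupp.weight (matCol A) (posExp u)) := by
  have hweight : Finsupp.weight (matCol A) (posExp (-u)) = Finsupp.weight (matCol A) (posExp u) :=
    (sub_eq_zero.mp ((weight_posExp_sub_weight_posExp_neg u).trans hu)).symm
  exact (isWeightedHomogeneous_monomial _ _ _ rfl).sub
    (isWeightedHomogeneous_monomial _ _ _ hweight)

theorem monomial_sub_monomial_mem_toricIdeal {e e' : Fin n →₀ ℕ}
    (h : Finsupp.weight (matCol A) e = Finsupp.weight (matCol A) e') :
    monomial e (1 : ℂ) - monomial e' 1 ∈ toricIdeal A := by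
  set u : Fin n → ℤ := fun j => (e j : ℤ) - e' j
  have he : e = e ⊓ e' + posExp u := by ext j; simp [u]; omega
  have he' : e' = e ⊓ e' + posExp (-u) := by ext j; simp [u]; omega
  have hu : A *ᵥ u = 0 := by
    have hw := congrArg (Finsupp.weight (matCol A)) he
    have hw' := congrArg (Finsupp.weight (matCol A)) he'
    rw [map_add] at hw hw'
    rw [← weight_posExp_sub_weight_posExp_neg, sub_eq_zero]
    exact add_left_cancel (hw.symm.trans (h.trans hw'))
  have hfactor : monomial e (1 : ℂ) - monomial e' 1 =
      monomial (e ⊓ e') 1 * (monomial (posExp u) 1 - monomial (posExp (-u)) 1) := by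
    rw [mul_sub, monomial_mul, monomial_mul, one_mul, ← he, ← he']
  rw [hfactor]
  exact Ideal.mul_mem_left _ _ (binomial_mem_toricIdeal hu)

theorem sum_monomial_sub_monomial_sum_mem_toricIdeal (s : Finset (Fin n →₀ ℕ))
    (c : (Fin n →₀ ℕ) → ℂ) {e₀ : Fin n →₀ ℕ}
    (hs : ∀ e ∈ s, Finsupp.weight (matCol A) e = Finsupp.weight (matCol A) e₀) :
    ∑ e ∈ s, monomial e (c e) - monomial e₀ (∑ e ∈ s, c e) ∈ toricIdeal A := by
  rw [map_sum, ← Finset.sum_sub_distrib]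
  refine Ideal.sum_mem _ fun e he => ?_
  rw [← mul_one (c e), ← C_mul_monomial, ← C_mul_monomial, ← mul_sub]
  exact Ideal.mul_mem_left _ _ (monomial_sub_monomial_mem_toricIdeal (hs e he))

theorem gradePiece_eq_weightedHomogeneousComponent (p : MvPolynomial (Fin n) ℂ) (b : Fin d → ℤ) :
    gradePiece A p b = weightedHomogeneousComponent (matCol A) b p := by
  classical
  have : adeg A = Finsupp.weight (matCol A) := by
    ext e i; rw [weight_matCol_apply]; rfl
  rw [weightedHomogeneousComponent_apply, gradePiece, this]

theorem isAGraded_iff_isHomogeneous {P : Ideal (MvPolynomial (Fin n) ℂ)} :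
    IsAGraded A P ↔ P.IsHomogeneous (weightedHomogeneousSubmodule ℂ (matCol A)) := by
  simp_rw [IsAGraded, gradePiece_eq_weightedHomogeneousComponent,
    ← weightedDecomposition.decompose'_apply]
  exact ⟨fun h b p hp => h p hp b, fun h p hp b => h b hp⟩

theorem isHomogeneous_toricFaceIdeal (τ : Set (Fin n)) :
    (toricFaceIdeal A τ).IsHomogeneous (weightedHomogeneousSubmodule ℂ (matCol A)) := by
  refine .sup (Ideal.homogeneous_span _ _ ?_) (Ideal.homogeneous_span _ _ ?_)
  · rintro _ ⟨u, hu, rfl⟩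
    exact ⟨_, isWeightedHomogeneous_binomial (funext hu)⟩
  · rintro _ ⟨j, -, rfl⟩
    exact ⟨_, isWeightedHomogeneous_X ℂ (matCol A) j⟩

theorem toricFaceIdeal_le_ker_eval {τ : Set (Fin n)} (hτ : IsFace A τ) :
    toricFaceIdeal A τ ≤ RingHom.ker (eval (τ.indicator 1)) := by
  refine sup_le (Ideal.span_le.mpr ?_) (Ideal.span_le.mpr ?_)
  · rintro _ ⟨u, hu, rfl⟩
    change monomial (posExp u) 1 - monomial (posExp (-u)) 1 ∈ _
    have hsupp : (∀ j ∉ τ, posExp u j = 0) ↔ ∀ j ∉ τ, posExp (-u) j = 0 := by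
      simp only [posExp_apply, Pi.neg_apply, Int.toNat_eq_zero, neg_nonpos]
      exact hτ.forall_nonpos_iff_forall_nonneg (funext hu)
    rw [SetLike.mem_coe, RingHom.mem_ker, map_sub, eval_indicator_monomial_one,
      eval_indicator_monomial_one]
    by_cases h : ∀ j ∉ τ, posExp u j = 0
    · rw [if_pos h, if_pos (hsupp.mp h), sub_self]
    · rw [if_neg h, if_neg (mt hsupp.mpr h), sub_self]
  · rintro _ ⟨j, hj, rfl⟩
    simp [hj]

theorem X_mem_toricFaceIdeal_iff {τ : Set (Fin n)} (hτ : IsFace A τ) {j : Fin n} :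
    X j ∈ toricFaceIdeal A τ ↔ j ∉ τ := by
  refine ⟨fun hX hj => ?_, fun hj => Ideal.mem_sup_right (Ideal.subset_span ⟨j, hj, rfl⟩)⟩
  simpa [hj] using toricFaceIdeal_le_ker_eval hτ hX

theorem toricFaceIdeal_injOn : Set.InjOn (toricFaceIdeal A) {τ | IsFace A τ} := by
  intro τ hτ τ' hτ' h
  ext j
  rw [← not_iff_not, ← X_mem_toricFaceIdeal_iff hτ, ← X_mem_toricFaceIdeal_iff hτ', h]

variable {P : Ideal (MvPolynomial (Fin n) ℂ)}

theorem toricFaceIdeal_setOf_X_notMem_le (hI : toricIdeal A ≤ P) :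
    toricFaceIdeal A {j | X j ∉ P} ≤ P :=
  sup_le hI (Ideal.span_le.mpr fun _ ⟨_, hj, hX⟩ => hX ▸ not_not.mp hj)

theorem isFace_setOf_X_notMem [P.IsPrime] (hI : toricIdeal A ≤ P) : IsFace A {j | X j ∉ P} := by
  refine isFace_of_forall_mulVec_eq_zero fun u hu hnonneg j hj => ?_
  by_contra hne
  have hpos : monomial (posExp u) (1 : ℂ) ∈ P :=
    Ideal.mem_of_dvd _ (X_dvd_monomial.mpr (.inr (by have := hnonneg j hj; simp; omega)))
      (not_not.mp hj)
  have hneg : monomial (posExp (-u)) (1 : ℂ) ∈ P := by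
    simpa using P.sub_mem hpos (hI (binomial_mem_toricIdeal hu))
  obtain ⟨k, hk, hkP⟩ := (monomial_mem_iff_of_isPrime _ isUnit_one).mp hneg
  have := hnonneg k (not_not.mpr hkP)
  simp only [posExp_apply, Pi.neg_apply] at hk
  omega

theorem mem_toricFaceIdeal_of_isWeightedHomogeneous [P.IsPrime] (hI : toricIdeal A ≤ P)
    {q : MvPolynomial (Fin n) ℂ} {b : Fin d → ℤ} (hq : IsWeightedHomogeneous (matCol A) q b)
    (hqP : q ∈ P) : q ∈ toricFaceIdeal A {j | X j ∉ P} := by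
  classical
  set τ : Set (Fin n) := {j | X j ∉ P}
  set s := q.support.filter fun e => ∀ j ∉ τ, e j = 0
  set rest := ∑ e ∈ q.support.filter (fun e => ¬ ∀ j ∉ τ, e j = 0), monomial e (coeff e q)
  have hsplit : q = ∑ e ∈ s, monomial e (coeff e q) + rest := by
    rw [Finset.sum_filter_add_sum_filter_not, support_sum_monomial_coeff]
  have hrest : rest ∈ Ideal.span {p | ∃ j ∉ τ, p = X j} := by
    refine Ideal.sum_mem _ fun e he => ?_
    obtain ⟨j, hj, hej⟩ := not_forall₂.mp (Finset.mem_filter.mp he).2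
    exact Ideal.mem_of_dvd _ (X_dvd_monomial.mpr (.inr hej)) (Ideal.subset_span ⟨j, hj, rfl⟩)
  rcases s.eq_empty_or_nonempty with hs | ⟨e₀, he₀⟩
  · rw [hsplit, hs, Finset.sum_empty, zero_add]
    exact Ideal.mem_sup_right hrest
  have hweight : ∀ e ∈ s, Finsupp.weight (matCol A) e = Finsupp.weight (matCol A) e₀ :=
    fun e he => (hq (mem_support_iff.mp (Finset.mem_filter.mp he).1)).trans
      (hq (mem_support_iff.mp (Finset.mem_filter.mp he₀).1)).symm
  have hdiff := sum_monomial_sub_monomial_sum_mem_toricIdeal s (coeff · q) hweight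
  -- otherwise `x^{e₀} ∈ P`, although `e₀` only involves variables outside `P`
  have hc : ∑ e ∈ s, coeff e q = 0 := by
    by_contra hc
    have hmon : monomial e₀ (∑ e ∈ s, coeff e q) ∈ P := by
      have hP := toricFaceIdeal_setOf_X_notMem_le hI
      have := P.sub_mem (P.sub_mem hqP (hP (Ideal.mem_sup_right hrest))) (hI hdiff)
      rwa [show q - rest - (∑ e ∈ s, monomial e (coeff e q) - monomial e₀ (∑ e ∈ s, coeff e q)) =
        monomial e₀ (∑ e ∈ s, coeff e q) by linear_combination hsplit] at this
    obtain ⟨j, hej, hjP⟩ := (monomial_mem_iff_of_isPrime e₀ (Ne.isUnit hc)).mp hmon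
    exact hej ((Finset.mem_filter.mp he₀).2 j (not_not.mpr hjP))
  rw [hc, monomial_zero, sub_zero] at hdiff
  rw [hsplit]
  exact add_mem (Ideal.mem_sup_left hdiff) (Ideal.mem_sup_right hrest)

theorem eq_toricFaceIdeal_setOf_X_notMem [P.IsPrime]
    (hP : P.IsHomogeneous (weightedHomogeneousSubmodule ℂ (matCol A))) (hI : toricIdeal A ≤ P) :
    P = toricFaceIdeal A {j | X j ∉ P} := by
  refine le_antisymm (fun p hp => ?_) (toricFaceIdeal_setOf_X_notMem_le hI)
  refine ((isHomogeneous_toricFaceIdeal _).mem_iff).mpr fun b => ?_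
  exact mem_toricFaceIdeal_of_isWeightedHomogeneous hI
    ((mem_weightedHomogeneousSubmodule _ _ _ _).mp (DirectSum.decompose _ p b).2) (hP b hp)

end Toric

theorem aGraded_primes_containing_toricIdeal_biject_with_faces_general
    {d n : ℕ} (A : Matrix (Fin d) (Fin n) ℤ) :
    (∀ P : Ideal (MvPolynomial (Fin n) ℂ), P.IsPrime →
      ((IsAGraded A P ∧ toricIdeal A ≤ P) ↔
        ∃ τ : Set (Fin n), IsFace A τ ∧ P = toricFaceIdeal A τ)) ∧
    (∀ τ τ' : Set (Fin n), IsFace A τ → IsFace A τ' → τ ≠ τ' →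
      toricFaceIdeal A τ ≠ toricFaceIdeal A τ') := by
  refine ⟨fun P hP => ⟨fun ⟨hgr, hI⟩ => ?_, ?_⟩,
    fun τ τ' hτ hτ' hne h => hne (toricFaceIdeal_injOn hτ hτ' h)⟩
  · exact ⟨_, isFace_setOf_X_notMem hI,
      eq_toricFaceIdeal_setOf_X_notMem (isAGraded_iff_isHomogeneous.mp hgr) hI⟩
  · rintro ⟨τ, -, rfl⟩
    exact ⟨isAGraded_iff_isHomogeneous.mpr (isHomogeneous_toricFaceIdeal τ), le_sup_left⟩

/-- a prime ideal of `ℂ[x₁,…,xₙ]` is `A`-graded and contains `I_A` iff it is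
`I_A^τ` for some face `τ` of `ℝ≥0 A`, and distinct faces give distinct ideals. -/
theorem aGraded_primes_containing_toricIdeal_biject_with_faces
    {d n : ℕ} (A : Matrix (Fin d) (Fin n) ℤ)
    (hfull : IsFull A) (hpointed : IsPointed A) (hcols : ∀ j, matCol A j ≠ 0) :
    (∀ P : Ideal (MvPolynomial (Fin n) ℂ), P.IsPrime →
      ((IsAGraded A P ∧ toricIdeal A ≤ P) ↔
        ∃ τ : Set (Fin n), IsFace A τ ∧ P = toricFaceIdeal A τ)) ∧
    (∀ τ τ' : Set (Fin n), IsFace A τ → IsFace A τ' → τ ≠ τ' →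
      toricFaceIdeal A τ ≠ toricFaceIdeal A τ') :=
  aGraded_primes_containing_toricIdeal_biject_with_faces_general A
end

section
/- Let a₁,…,aₙ ∈ ℤ^d be nonzero. The semigroup ℕA is pointed (i.e. the only u ∈ ℕA with −u ∈ ℕA is u = 0) if and only if there exists a group homomorphism φ : ℤ^d → ℤ with φ(a_j) > 0 for every j = 1,…,n. -/
open Finset Module

namespace PointedCone

theorem mem_hull_range_iff {K V ι : Type*} [Semiring K] [PartialOrder K] [IsOrderedRing K]
    [AddCommMonoid V] [Module K V] [Fintype ι] {a : ι → V} {b : V} :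
    b ∈ hull K (Set.range a) ↔ ∃ μ : ι → K, 0 ≤ μ ∧ ∑ i, μ i • a i = b := by
  rw [Submodule.mem_span_range_iff_exists_fun]
  constructor
  · rintro ⟨c, rfl⟩
    exact ⟨fun i => c i, fun i => (c i).2, rfl⟩
  · rintro ⟨μ, hμ, rfl⟩
    exact ⟨fun i => ⟨μ i, hμ i⟩, rfl⟩

theorem dual_nonneg_of_mem_hull_range {K V ι : Type*} [CommSemiring K] [PartialOrder K]
    [IsOrderedRing K] [AddCommMonoid V] [Module K V] [Fintype ι] {a : ι → V} {f : Dual K V}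
    (hf : ∀ i, 0 ≤ f (a i)) {w : V} (hw : w ∈ hull K (Set.range a)) : 0 ≤ f w := by
  obtain ⟨μ, hμ, rfl⟩ := mem_hull_range_iff.mp hw
  simp only [map_sum, map_smul, smul_eq_mul]
  exact sum_nonneg fun i _ => mul_nonneg (hμ i) (hf i)

end PointedCone

namespace Module.Dual

/-- `y x` times the projection of `V` onto `ker y` along `x`. -/
def projAlong {K V : Type*} [CommRing K] [AddCommGroup V] [Module K V] (y : Dual K V) (x : V) :
    V →ₗ[K] V :=
  y x • LinearMap.id - y.smulRight x

@[simp]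
theorem projAlong_apply {K V : Type*} [CommRing K] [AddCommGroup V] [Module K V] (y : Dual K V)
    (x v : V) : y.projAlong x v = y x • v - y v • x :=
  rfl

theorem eq_smul_of_projAlong_eq_zero {K V : Type*} [Field K] [AddCommGroup V] [Module K V]
    {y : Dual K V} {x w : V} (hx : y x ≠ 0) (h : y.projAlong x w = 0) : w = (y w / y x) • x := by
  rw [projAlong_apply, sub_eq_zero] at h
  rw [div_eq_inv_mul, mul_smul, ← h, inv_smul_smul₀ hx]

end Module.Dual

open PointedCone

section Farkas

variable {K V : Type*} [Field K] [LinearOrder K] [IsStrictOrderedRing K]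
  [AddCommGroup V] [Module K V]

theorem mem_hull_range_snoc_of_projAlong_mem {n : ℕ} {a : Fin n → V} {x b : V} {y : Dual K V}
    (hy : ∀ i, 0 ≤ y (a i)) (hyx : y x < 0) (hyb : y b < 0)
    (h : y.projAlong x b ∈ hull K (Set.range (y.projAlong x ∘ a))) :
    b ∈ hull K (Set.range (Fin.snoc a x : Fin (n + 1) → V)) := by
  obtain ⟨μ, hμ, hμb⟩ := mem_hull_range_iff.mp h
  set w := b - ∑ i, μ i • a i
  have hw : y.projAlong x w = 0 := by
    simp only [w, map_sub, map_sum, map_smul, ← hμb, Function.comp_apply, sub_self]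
  have hyw : y w < 0 := by
    have : 0 ≤ y (∑ i, μ i • a i) :=
      dual_nonneg_of_mem_hull_range hy (mem_hull_range_iff.mpr ⟨μ, hμ, rfl⟩)
    simp only [w, map_sub]
    linarith
  refine mem_hull_range_iff.mpr ⟨Fin.snoc μ (y w / y x), ?_, ?_⟩
  · intro i
    induction i using Fin.lastCases with
    | last => simpa using (div_pos_of_neg_of_neg hyw hyx).le
    | cast i => simpa using hμ i
  · rw [Fin.sum_univ_castSucc]
    simp only [Fin.snoc_castSucc, Fin.snoc_last]
    rw [← Dual.eq_smul_of_projAlong_eq_zero hyx.ne hw]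
    simp [w]

theorem exists_dual_nonneg_of_notMem_hull {n : ℕ} (a : Fin n → V) {b : V}
    (hb : b ∉ hull K (Set.range a)) : ∃ f : Dual K V, (∀ i, 0 ≤ f (a i)) ∧ f b < 0 := by
  induction n generalizing b with
  | zero =>
    have hb0 : b ≠ 0 := by rintro rfl; exact hb (zero_mem _)
    obtain ⟨f, hf⟩ := Projective.exists_dual_eq_one K hb0
    exact ⟨-f, finZeroElim, by simp [hf]⟩
  | succ n ih =>
    rw [← Fin.snoc_init_self a] at hb ⊢
    set x := a (Fin.last n)
    have hb' : b ∉ hull K (Set.range (Fin.init a)) := fun h =>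
      hb (Submodule.span_mono (by simp [Fin.range_snoc]) h)
    obtain ⟨y, hy, hyb⟩ := ih (Fin.init a) hb'
    rcases le_or_gt 0 (y x) with hyx | hyx
    · refine ⟨y, fun i => ?_, hyb⟩
      induction i using Fin.lastCases <;> simp [hy, hyx]
    -- Fourier–Motzkin: eliminate `x` by projecting onto `ker y` along it.
    obtain ⟨z, hz, hzb⟩ := ih (y.projAlong x ∘ Fin.init a)
      (mt (mem_hull_range_snoc_of_projAlong_mem hy hyx hyb) hb)
    refine ⟨z ∘ₗ y.projAlong x, fun i => ?_, hzb⟩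
    induction i using Fin.lastCases with
    | last => simp
    | cast i => simpa using hz i

theorem exists_dual_pos_of_nonneg_relation_eq_zero {n : ℕ} (a : Fin n → V)
    (ha : ∀ c : Fin n → K, 0 ≤ c → ∑ i, c i • a i = 0 → c = 0) :
    ∃ f : Dual K V, ∀ j, 0 < f (a j) := by
  have hneg : ∀ j, -a j ∉ hull K (Set.range a) := by
    intro j hj
    obtain ⟨μ, hμ, hμj⟩ := mem_hull_range_iff.mp hj
    have hrel : ∑ i, (μ + Pi.single j 1 : Fin n → K) i • a i = 0 := by
      simp [add_smul, sum_add_distrib, hμj, Pi.single_apply]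
    have hcj := congrFun (ha _ (add_nonneg hμ (Pi.single_nonneg.mpr zero_le_one)) hrel) j
    simp only [Pi.add_apply, Pi.single_eq_same, Pi.zero_apply] at hcj
    exact (add_pos_of_nonneg_of_pos (hμ j) one_pos).ne' hcj
  choose f hf hfj using fun j => exists_dual_nonneg_of_notMem_hull a (hneg j)
  refine ⟨∑ k, f k, fun j => ?_⟩
  rw [LinearMap.sum_apply]
  exact sum_pos' (fun k _ => hf k j) ⟨j, mem_univ j, by simpa using hfj j⟩

end Farkas

theorem exists_pos_nat_mul_eq_intCast {ι : Type*} [Fintype ι] (q : ι → ℚ) :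
    ∃ N : ℕ, 0 < N ∧ ∃ z : ι → ℤ, ∀ i, (z i : ℚ) = N * q i := by
  classical
  refine ⟨∏ k, (q k).den, prod_pos fun k _ => (q k).den_pos,
    fun i => (q i).num * ∏ k ∈ univ.erase i, ((q k).den : ℤ), fun i => ?_⟩
  rw [← mul_prod_erase univ _ (mem_univ i)]
  push_cast
  rw [← Rat.mul_den_eq_num]
  ring

theorem nat_relation_eq_zero_of_map_pos {M κ : Type*} [AddCommMonoid M] [Fintype κ]
    {a : κ → M} (φ : M →+ ℤ) (hφ : ∀ j, 0 < φ (a j)) {m : κ → ℕ}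
    (hm : ∑ j, m j • a j = 0) : m = 0 := by
  have hsum : ∑ j, m j • φ (a j) = 0 := by
    simpa only [map_sum, map_nsmul, map_zero] using congrArg φ hm
  funext j
  have hj := (sum_eq_zero_iff_of_nonneg fun k _ => nsmul_nonneg (hφ k).le (m k)).mp hsum j
    (mem_univ j)
  exact (smul_eq_zero.mp hj).resolve_right (hφ j).ne'

theorem rat_relation_eq_zero_of_nat {ι κ : Type*} [Fintype κ] {a : κ → ι → ℤ}
    (ha : ∀ m : κ → ℕ, ∑ j, m j • a j = 0 → m = 0) (c : κ → ℚ) (hc : 0 ≤ c)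
    (hrel : ∑ j, c j • (fun i => (a j i : ℚ)) = 0) : c = 0 := by
  obtain ⟨N, hN, z, hz⟩ := exists_pos_nat_mul_eq_intCast c
  have hm : ∀ j, ((z j).toNat : ℚ) = N * c j := fun j => by
    have hzj : 0 ≤ z j := by
      have h : (0 : ℚ) ≤ N * c j := mul_nonneg N.cast_nonneg (hc j)
      rw [← hz] at h
      exact_mod_cast h
    rw [← hz, ← Int.toNat_of_nonneg hzj, Int.cast_natCast, Int.toNat_natCast]
  have hrelN : ∑ j, (z j).toNat • a j = 0 := by
    funext i
    apply Int.cast_injective (α := ℚ)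
    have hi := congrFun hrel i
    simp only [Finset.sum_apply, Pi.smul_apply, smul_eq_mul, Pi.zero_apply] at hi ⊢
    simp only [nsmul_eq_mul, Int.cast_sum, Int.cast_mul, Int.cast_natCast, Int.cast_zero, hm,
      mul_assoc, ← mul_sum, hi, mul_zero]
  funext j
  have hj := hm j
  rw [congrFun (ha _ hrelN) j, Pi.zero_apply, Nat.cast_zero, zero_eq_mul] at hj
  exact hj.resolve_left (Nat.cast_ne_zero.mpr hN.ne')

theorem exists_addMonoidHom_pos_of_dual_pos {ι κ : Type*} [Fintype ι] {a : κ → ι → ℤ}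
    (f : Dual ℚ (ι → ℚ)) (hf : ∀ j, 0 < f (fun i => (a j i : ℚ))) :
    ∃ φ : (ι → ℤ) →+ ℤ, ∀ j, 0 < φ (a j) := by
  classical
  obtain ⟨N, hN, z, hz⟩ := exists_pos_nat_mul_eq_intCast fun i => f (Pi.single i 1)
  refine ⟨AddMonoidHom.mk' (z ⬝ᵥ ·) (dotProduct_add z), fun j => ?_⟩
  have hcast : ((z ⬝ᵥ a j : ℤ) : ℚ) = N * f (fun i => (a j i : ℚ)) := by
    rw [f.pi_apply_eq_sum_univ]
    have hsingle : ∀ i : ι, (fun k => if i = k then (1 : ℚ) else 0) = Pi.single i 1 :=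
      fun i => funext fun k => by simp [Pi.single_apply, eq_comm]
    simp only [dotProduct, Int.cast_sum, Int.cast_mul, hz, mul_sum, smul_eq_mul, hsingle]
    exact sum_congr rfl fun i _ => by ring
  have hpos : (0 : ℚ) < (z ⬝ᵥ a j : ℤ) := hcast ▸ mul_pos (by exact_mod_cast hN) (hf j)
  exact_mod_cast hpos

section Pointed

variable {d n : ℕ} {A : Matrix (Fin d) (Fin n) ℤ}

theorem IsPointed.nat_relation_eq_zero (hp : IsPointed A) (hcols : ∀ j, matCol A j ≠ 0)
    {m : Fin n → ℕ} (hm : ∑ j, m j • matCol A j = 0) : m = 0 := by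
  refine funext fun k => Nat.eq_zero_of_not_pos fun hk => ?_
  obtain ⟨m', rfl⟩ : ∃ m', m = m' + Pi.single k 1 :=
    ⟨m - Pi.single k 1, funext fun j => by
      rcases eq_or_ne j k with rfl | hj
      · simp only [Pi.add_apply, Pi.sub_apply, Pi.single_eq_same]
        omega
      · simp [hj]⟩
  have hsum : ∑ j, m' j • matCol A j = -matCol A k := by
    simpa [add_smul, sum_add_distrib, Pi.single_apply, eq_neg_iff_add_eq_zero] using hm
  exact hcols k (hp _ ⟨Pi.single k 1, by simp [Pi.single_apply]⟩ ⟨m', hsum.symm⟩)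

theorem isPointed_of_nat_relation_eq_zero
    (h : ∀ m : Fin n → ℕ, ∑ j, m j • matCol A j = 0 → m = 0) : IsPointed A := by
  rintro v ⟨c, rfl⟩ ⟨c', hc'⟩
  have hcc' : c + c' = 0 :=
    h _ (by simp only [Pi.add_apply, add_smul, sum_add_distrib, ← hc', add_neg_cancel])
  have hc : c = 0 := funext fun j => (Nat.add_eq_zero_iff.mp (congrFun hcc' j)).1
  simp [hc]

end Pointed

/-- for nonzero columns `a₁,…,aₙ ∈ ℤ^d`, the semigroup `ℕA` is pointed iff
there is a group homomorphism `φ : ℤ^d → ℤ` positive on every column. -/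
theorem pointed_iff_exists_positive_functional
    {d n : ℕ} (A : Matrix (Fin d) (Fin n) ℤ) (hcols : ∀ j, matCol A j ≠ 0) :
    IsPointed A ↔ ∃ φ : (Fin d → ℤ) →+ ℤ, ∀ j, 0 < φ (matCol A j) := by
  constructor
  · intro hp
    obtain ⟨f, hf⟩ := exists_dual_pos_of_nonneg_relation_eq_zero (fun j i => (matCol A j i : ℚ))
      (rat_relation_eq_zero_of_nat fun _ => hp.nat_relation_eq_zero hcols)
    exact exists_addMonoidHom_pos_of_dual_pos f hf
  · rintro ⟨φ, hφ⟩
    exact isPointed_of_nat_relation_eq_zero fun _ => nat_relation_eq_zero_of_map_pos φ hφ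
end

section
/- Let A ∈ ℤ^{d×n} be full and pointed with all columns nonzero, and suppose the semigroup ℕA is saturated. Then ℕA ∩ sRes(A) = ∅; in particular 0 is not a strongly resonant parameter of A. -/
/-- The cone `ℝ≥0 A ⊆ ℝ^d` spanned by the columns of `A`. -/
def coneRA {d n : ℕ} (A : Matrix (Fin d) (Fin n) ℤ) : Set (Fin d → ℝ) :=
  {w | ∃ lam : Fin n → ℝ, (∀ j, 0 ≤ lam j) ∧ w = ∑ j, lam j • (fun i => (A i j : ℝ))}

/-- `ℕA` is saturated: `ℕA = ℤA ∩ ℝ≥0 A`. -/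
def IsSaturated {d n : ℕ} (A : Matrix (Fin d) (Fin n) ℤ) : Prop :=
  ∀ v : Fin d → ℤ, v ∈ semigroupNA A ↔
    ((∃ c : Fin n → ℤ, v = ∑ j, c j • matCol A j) ∧ (fun i => (v i : ℝ)) ∈ coneRA A)

/-- The true degrees of `S_A/(t^{a_j})`: elements of `ℕA` that are not in `a_j + ℕA`. -/
def tdegSlice {d n : ℕ} (A : Matrix (Fin d) (Fin n) ℤ) (j : Fin n) : Set (Fin d → ℤ) :=
  {b | b ∈ semigroupNA A ∧ b - matCol A j ∉ semigroupNA A}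

/-- The quasi-degrees of `S_A/(t^{a_j})`: the Zariski closure in `ℂ^d` of the true degrees. -/
def qdegSlice {d n : ℕ} (A : Matrix (Fin d) (Fin n) ℤ) (j : Fin n) : Set (Fin d → ℂ) :=
  {β | ∀ p : MvPolynomial (Fin d) ℂ,
    (∀ b ∈ tdegSlice A j, MvPolynomial.eval (fun i => (b i : ℂ)) p = 0) →
    MvPolynomial.eval β p = 0}

/-- The strongly resonant parameters
`sRes(A) = ⋃_j ⋃_{k∈ℕ} { -(k+1)a_j + γ : γ ∈ qdeg_A(S_A/(t^{a_j})) }`. -/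
def sRes {d n : ℕ} (A : Matrix (Fin d) (Fin n) ℤ) : Set (Fin d → ℂ) :=
  {β | ∃ j : Fin n, ∃ k : ℕ, ∃ γ ∈ qdegSlice A j,
    β = fun i => -((k : ℂ) + 1) * (A i j : ℂ) + γ i}

/-!
By Minkowski–Weyl, the cone `ℝ≥0 A` is cut out by finitely many linear forms `h ∈ H`, and
Fourier–Motzkin elimination produces them with integer coefficients. If `b` is a true degree
of `S_A/(t^{a_j})`, then `b - a_j ∈ ℤA` is not in `ℕA`, so by saturation it lies outside the
cone: some `h ∈ H` has `0 ≤ h·b < h·a_j`. Hence all true degrees, and with them their Zariski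
closure `qdeg_j`, lie on the finitely many hyperplanes `h·x = m` with `h ∈ H`, `0 ≤ m < h·a_j`.
If `v ∈ ℕA` were in `sRes(A)`, then `v + (k+1) a_j ∈ qdeg_j` for some `j` and `k`; but
`h·(v + (k+1) a_j) ≥ h·a_j` for every `h ∈ H`, so that point lies on none of these hyperplanes.
-/

section IntDot

variable {R : Type*} [CommRing R] {d : ℕ}

def intDot (h : Fin d → ℤ) (x : Fin d → R) : R := ∑ i, h i • x i

@[simp]
lemma intDot_sub_right (h : Fin d → ℤ) (x y : Fin d → R) :
    intDot h (x - y) = intDot h x - intDot h y := by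
  simp [intDot, smul_sub, Finset.sum_sub_distrib]

@[simp]
lemma intDot_smul_right (h : Fin d → ℤ) (t : R) (x : Fin d → R) :
    intDot h (t • x) = t * intDot h x := by
  simp [intDot, Finset.mul_sum, mul_left_comm t]

@[simp]
lemma intDot_intCast (h w : Fin d → ℤ) : intDot h (Int.cast ∘ w : Fin d → R) = (h ⬝ᵥ w : ℤ) := by
  simp [intDot, dotProduct]

@[simp]
lemma intDot_zsmul_sub_zsmul (c e : ℤ) (g h : Fin d → ℤ) (x : Fin d → R) :
    intDot (c • g - e • h) x = c * intDot g x - e * intDot h x := by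
  simp [intDot, sub_smul, mul_smul, Finset.sum_sub_distrib, Finset.mul_sum, zsmul_eq_mul]

@[simp]
lemma intDot_single (i : Fin d) (m : ℤ) (x : Fin d → R) : intDot (Pi.single i m) x = m * x i := by
  simp [intDot, Pi.single_apply, zsmul_eq_mul]

end IntDot

section FourierMotzkin

variable {K : Type*} [Field K] [LinearOrder K] [IsStrictOrderedRing K]

theorem exists_nonneg_forall_mul_le_iff {ι : Type*} (s : Finset ι) (α β : ι → K) :
    (∃ t, 0 ≤ t ∧ ∀ i ∈ s, t * α i ≤ β i) ↔
      (∀ i ∈ s, 0 ≤ α i → 0 ≤ β i) ∧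
        ∀ i ∈ s, ∀ j ∈ s, α i < 0 → 0 < α j → 0 ≤ α j * β i - α i * β j := by
  constructor
  · rintro ⟨t, ht, hle⟩
    refine ⟨fun i hi hαi => (mul_nonneg ht hαi).trans (hle i hi), fun i hi j hj hαi hαj => ?_⟩
    nlinarith [hle i hi, hle j hj]
  · rintro ⟨hβ, hpair⟩
    classical
    -- the largest lower bound on `t`, together with `0`
    set L := insert 0 ((s.filter (α · < 0)).image fun i => β i / α i)
    refine ⟨L.max' (Finset.insert_nonempty _ _),
      L.le_max' 0 (Finset.mem_insert_self _ _), fun i hi => ?_⟩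
    rcases lt_trichotomy (α i) 0 with hαi | hαi | hαi
    · refine (div_le_iff_of_neg hαi).1 (L.le_max' _ (Finset.mem_insert_of_mem ?_))
      exact Finset.mem_image_of_mem _ (Finset.mem_filter.2 ⟨hi, hαi⟩)
    · simpa [hαi] using hβ i hi hαi.ge
    · have hmem := L.max'_mem (Finset.insert_nonempty _ _)
      rcases Finset.mem_insert.1 hmem with hzero | hmem
      · rw [hzero, zero_mul]
        exact hβ i hi hαi.le
      · obtain ⟨g, hg, hmax⟩ := Finset.mem_image.1 hmem
        obtain ⟨hg, hαg⟩ := Finset.mem_filter.1 hg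
        rw [← hmax, div_mul_eq_mul_div, div_le_iff_of_neg hαg]
        linarith [hpair g hg i hi hαg hαi]

variable {d : ℕ}

def fourierMotzkin (H : Finset (Fin d → ℤ)) (a : Fin d → ℤ) : Finset (Fin d → ℤ) :=
  H.filter (fun h => 0 ≤ h ⬝ᵥ a) ∪
    ((H ×ˢ H).filter fun p => p.1 ⬝ᵥ a < 0 ∧ 0 < p.2 ⬝ᵥ a).image
      fun p => (p.2 ⬝ᵥ a) • p.1 - (p.1 ⬝ᵥ a) • p.2

theorem forall_mem_fourierMotzkin_iff (H : Finset (Fin d → ℤ)) (a : Fin d → ℤ) (x : Fin d → K) :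
    (∀ h ∈ fourierMotzkin H a, 0 ≤ intDot h x) ↔
      ∃ t : K, 0 ≤ t ∧ ∀ h ∈ H, 0 ≤ intDot h (x - t • (Int.cast ∘ a : Fin d → K)) := by
  simp only [intDot_sub_right, intDot_smul_right, intDot_intCast, sub_nonneg]
  rw [exists_nonneg_forall_mul_le_iff]
  simp only [fourierMotzkin, Finset.forall_mem_union, Finset.forall_mem_image, Finset.mem_filter,
    Finset.mem_product, Prod.forall, and_imp, intDot_zsmul_sub_zsmul, Int.cast_nonneg_iff,
    Int.cast_lt_zero, Int.cast_pos, sub_nonneg]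
  exact and_congr_right' ⟨fun h i hi j hj => h i j hi hj, fun h i j hi hj => h i hi j hj⟩

lemma PointedCone.mem_hull_insert_iff {E : Type*} [AddCommGroup E] [Module K E] {s : Set E}
    {x y : E} :
    x ∈ PointedCone.hull K (insert y s) ↔ ∃ t : K, 0 ≤ t ∧ x - t • y ∈ PointedCone.hull K s := by
  rw [PointedCone.hull, Submodule.mem_span_insert]
  constructor
  · rintro ⟨t, z, hz, rfl⟩
    exact ⟨t, t.2, by simpa [Nonneg.coe_smul] using hz⟩
  · rintro ⟨t, ht, hz⟩
    exact ⟨⟨t, ht⟩, _, hz, by simp [Nonneg.mk_smul]⟩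

theorem exists_intHalfspaces_iff_mem_hull (T : Finset (Fin d → ℤ)) :
    ∃ H : Finset (Fin d → ℤ), ∀ x : Fin d → K,
      x ∈ PointedCone.hull K ((Int.cast ∘ · : (Fin d → ℤ) → Fin d → K) '' T) ↔
        ∀ h ∈ H, 0 ≤ intDot h x := by
  classical
  induction T using Finset.induction_on with
  | empty =>
    refine ⟨Finset.univ.image (Pi.single · 1) ∪ Finset.univ.image (Pi.single · (-1)), fun x => ?_⟩
    simp only [Finset.coe_empty, Set.image_empty, PointedCone.hull, Submodule.span_empty,
      Submodule.mem_bot, Finset.forall_mem_union, Finset.forall_mem_image, Finset.mem_univ,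
      forall_const, intDot_single, Int.cast_one, Int.cast_neg, one_mul, neg_one_mul, neg_nonneg,
      ← forall_and, funext_iff, Pi.zero_apply]
    exact forall_congr' fun i => (le_antisymm_iff.trans and_comm)
  | insert a T _ ih =>
    obtain ⟨H, hH⟩ := ih
    refine ⟨fourierMotzkin H a, fun x => ?_⟩
    rw [forall_mem_fourierMotzkin_iff, Finset.coe_insert, Set.image_insert_eq,
      PointedCone.mem_hull_insert_iff]
    simp only [hH]

end FourierMotzkin

section PolyhedralCone

variable {d n : ℕ}

lemma mem_coneRA_iff_mem_hull (A : Matrix (Fin d) (Fin n) ℤ) (w : Fin d → ℝ) :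
    w ∈ coneRA A ↔ w ∈ PointedCone.hull ℝ
      ((Int.cast ∘ · : (Fin d → ℤ) → Fin d → ℝ) '' Set.range (matCol A)) := by
  rw [← Set.range_comp, PointedCone.hull, Submodule.mem_span_range_iff_exists_fun]
  constructor
  · rintro ⟨lam, hlam, rfl⟩
    exact ⟨fun j => ⟨lam j, hlam j⟩, by simp [Nonneg.mk_smul]; rfl⟩
  · rintro ⟨lam, rfl⟩
    exact ⟨fun j => lam j, fun j => (lam j).2, by simp [Nonneg.coe_smul]; rfl⟩

theorem exists_intHalfspaces_coneRA (A : Matrix (Fin d) (Fin n) ℤ) :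
    ∃ H : Finset (Fin d → ℤ), ∀ w : Fin d → ℤ,
      (Int.cast ∘ w : Fin d → ℝ) ∈ coneRA A ↔ ∀ h ∈ H, 0 ≤ h ⬝ᵥ w := by
  classical
  obtain ⟨H, hH⟩ := exists_intHalfspaces_iff_mem_hull (K := ℝ) (Finset.univ.image (matCol A))
  refine ⟨H, fun w => ?_⟩
  have hrange : Set.range (matCol A) = Finset.univ.image (matCol A) := by simp
  rw [mem_coneRA_iff_mem_hull, hrange, hH]
  simp only [intDot_intCast, Int.cast_nonneg_iff]

end PolyhedralCone

section Semigroup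

variable {d n : ℕ} {A : Matrix (Fin d) (Fin n) ℤ}

lemma intCast_mem_coneRA {v : Fin d → ℤ} (hv : v ∈ semigroupNA A) :
    (Int.cast ∘ v : Fin d → ℝ) ∈ coneRA A := by
  obtain ⟨c, rfl⟩ := hv
  exact ⟨fun j => c j, fun j => by positivity, by ext; simp [matCol]⟩

lemma zero_mem_semigroupNA : (0 : Fin d → ℤ) ∈ semigroupNA A := ⟨0, by simp⟩

lemma matCol_mem_semigroupNA (j : Fin n) : matCol A j ∈ semigroupNA A :=
  ⟨Pi.single j 1, by simp [Pi.single_apply]⟩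

lemma exists_intComb_sub_matCol {b : Fin d → ℤ} (hb : b ∈ semigroupNA A) (j : Fin n) :
    ∃ c : Fin n → ℤ, b - matCol A j = ∑ j', c j' • matCol A j' := by
  obtain ⟨c, rfl⟩ := hb
  refine ⟨fun j' => c j' - (Pi.single j 1 : Fin n → ℤ) j', ?_⟩
  simp [sub_smul, Finset.sum_sub_distrib, Pi.single_apply]

lemma exists_separating_of_mem_tdegSlice (hsat : IsSaturated A) {H : Finset (Fin d → ℤ)}
    (hH : ∀ w : Fin d → ℤ, (Int.cast ∘ w : Fin d → ℝ) ∈ coneRA A ↔ ∀ h ∈ H, 0 ≤ h ⬝ᵥ w)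
    {j : Fin n} {b : Fin d → ℤ} (hb : b ∈ tdegSlice A j) :
    ∃ h ∈ H, 0 ≤ h ⬝ᵥ b ∧ h ⬝ᵥ b < h ⬝ᵥ matCol A j := by
  obtain ⟨hbA, hbj⟩ := hb
  obtain ⟨h, hh, hlt⟩ : ∃ h ∈ H, h ⬝ᵥ (b - matCol A j) < 0 := by
    by_contra! hall
    exact hbj ((hsat _).2 ⟨exists_intComb_sub_matCol hbA j, (hH _).2 hall⟩)
  rw [dotProduct_sub, sub_neg] at hlt
  exact ⟨h, hh, (hH b).1 (intCast_mem_coneRA hbA) h hh, hlt⟩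

end Semigroup

section SlabPolynomial

variable {R : Type*} [CommRing R] {d : ℕ}

open MvPolynomial

noncomputable def slabPoly (H : Finset (Fin d → ℤ)) (a : Fin d → ℤ) : MvPolynomial (Fin d) R :=
  ∏ h ∈ H, ∏ m ∈ Finset.Ico 0 (h ⬝ᵥ a), (∑ i, C (h i : R) * X i - C (m : R))

lemma eval_intCast_slabPoly (H : Finset (Fin d → ℤ)) (a w : Fin d → ℤ) :
    eval (Int.cast ∘ w) (slabPoly H a : MvPolynomial (Fin d) R) =
      ((∏ h ∈ H, ∏ m ∈ Finset.Ico 0 (h ⬝ᵥ a), (h ⬝ᵥ w - m) : ℤ) : R) := by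
  simp [slabPoly, dotProduct]

lemma eval_intCast_slabPoly_eq_zero_iff [CharZero R] (H : Finset (Fin d → ℤ)) (a w : Fin d → ℤ) :
    eval (Int.cast ∘ w) (slabPoly H a : MvPolynomial (Fin d) R) = 0 ↔
      ∃ h ∈ H, 0 ≤ h ⬝ᵥ w ∧ h ⬝ᵥ w < h ⬝ᵥ a := by
  rw [eval_intCast_slabPoly, Int.cast_eq_zero]
  simp [Finset.prod_eq_zero_iff, sub_eq_zero]

end SlabPolynomial

theorem intCast_add_smul_matCol_notMem_qdegSlice {d n : ℕ} {A : Matrix (Fin d) (Fin n) ℤ}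
    (hsat : IsSaturated A) {v : Fin d → ℤ} (hv : v ∈ semigroupNA A) (j : Fin n) (k : ℕ) :
    (Int.cast ∘ (v + ((k : ℤ) + 1) • matCol A j) : Fin d → ℂ) ∉ qdegSlice A j := by
  obtain ⟨H, hH⟩ := exists_intHalfspaces_coneRA A
  intro hq
  have hnonneg : ∀ w ∈ semigroupNA A, ∀ h ∈ H, 0 ≤ h ⬝ᵥ w := fun w hw =>
    (hH w).1 (intCast_mem_coneRA hw)
  have hvanish := hq (slabPoly H (matCol A j)) fun b hb =>
    (eval_intCast_slabPoly_eq_zero_iff _ _ b).2 (exists_separating_of_mem_tdegSlice hsat hH hb)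
  obtain ⟨h, hh, -, hlt⟩ := (eval_intCast_slabPoly_eq_zero_iff _ _ _).1 hvanish
  have hv := hnonneg v hv h hh
  have haj := hnonneg _ (matCol_mem_semigroupNA j) h hh
  rw [dotProduct_add, dotProduct_smul, smul_eq_mul] at hlt
  nlinarith

theorem saturated_semigroup_disjoint_sRes_general
    {d n : ℕ} (A : Matrix (Fin d) (Fin n) ℤ)
    (hsat : IsSaturated A) :
    (∀ v ∈ semigroupNA A, (fun i => (v i : ℂ)) ∉ sRes A) ∧
    (0 : Fin d → ℂ) ∉ sRes A := by
  have hdisj : ∀ v ∈ semigroupNA A, (fun i => (v i : ℂ)) ∉ sRes A := by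
    rintro v hv ⟨j, k, γ, hγ, heq⟩
    have hγ_eq : γ = Int.cast ∘ (v + ((k : ℤ) + 1) • matCol A j) := by
      funext i
      have := congrFun heq i
      simp only [Function.comp_apply, Pi.add_apply, Pi.smul_apply, smul_eq_mul, matCol] at this ⊢
      push_cast
      linear_combination -this
    exact intCast_add_smul_matCol_notMem_qdegSlice hsat hv j k (hγ_eq ▸ hγ)
  refine ⟨hdisj, ?_⟩
  convert hdisj 0 zero_mem_semigroupNA using 1
  simp [Pi.zero_def]

/-- if `ℕA` is saturated then `ℕA ∩ sRes(A) = ∅`; in particular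
`0 ∉ sRes(A)`. -/
theorem saturated_semigroup_disjoint_sRes
    {d n : ℕ} (A : Matrix (Fin d) (Fin n) ℤ)
    (hfull : IsFull A) (hpointed : IsPointed A) (hcols : ∀ j, matCol A j ≠ 0)
    (hsat : IsSaturated A) :
    (∀ v ∈ semigroupNA A, (fun i => (v i : ℂ)) ∉ sRes A) ∧
    (0 : Fin d → ℂ) ∉ sRes A :=
  saturated_semigroup_disjoint_sRes_general A hsat
end

section
/- Let a, b ∈ ℂ and let c ∈ ℂ not be a nonpositive integer. The Gauss hypergeometric series F(z) = ∑_{n=0}^∞ ([a]_n [b]_n / [c]_n) · zⁿ/n! converges for every z ∈ ℂ with |z| < 1, and the holomorphic function F it defines satisfies, for every z with 0 < |z| < 1, the Gauss hypergeometric differential equation F''(z) + ((c − (a+b+1)z)/(z(1−z)))·F'(z) = (ab/(z(1−z)))·F(z). -/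
/-- The ascending factorial `[x]_n = x(x+1)⋯(x+n−1)`. -/
noncomputable def ascFac (x : ℂ) (n : ℕ) : ℂ := ∏ k ∈ Finset.range n, (x + k)

/-! The series is Mathlib's `₂F₁ a b c = ∑ qₙ zⁿ`, whose radius of convergence is at least `1`
(it is `⊤` when `a` or `b` is a nonpositive integer, the series being then a polynomial), so it
may be differentiated termwise on the unit disc. Multiplied by `z(1 - z)`, the equation says that
`z F'' + c F'` and `z² F'' + (a + b + 1) z F' + ab F` agree; both are power series, with
coefficients `(n + 1)(n + c) qₙ₊₁` and `(n + a)(n + b) qₙ`, which are equal by the recurrence of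
the hypergeometric coefficients. -/

open FormalMultilinearSeries

theorem HasFPowerSeriesOnBall.deriv_ofScalars {𝕜 : Type*} [NontriviallyNormedField 𝕜]
    [CompleteSpace 𝕜] {f : 𝕜 → 𝕜} {q : ℕ → 𝕜} {r : ENNReal}
    (hf : HasFPowerSeriesOnBall f (ofScalars 𝕜 q) 0 r) :
    HasFPowerSeriesOnBall (deriv f) (ofScalars 𝕜 fun n => (n + 1) * q (n + 1)) 0 r := by
  convert! (ContinuousLinearMap.apply 𝕜 𝕜 (1 : 𝕜)).comp_hasFPowerSeriesOnBall hf.fderiv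
  ext n
  simp

theorem HasFPowerSeriesOnBall.hasSum_ofScalars {𝕜 : Type*} [NontriviallyNormedField 𝕜]
    {f : 𝕜 → 𝕜} {q : ℕ → 𝕜} {r : ENNReal} (hf : HasFPowerSeriesOnBall f (ofScalars 𝕜 q) 0 r)
    {z : 𝕜} (hz : z ∈ Metric.eball 0 r) : HasSum (fun n => q n * z ^ n) (f z) := by
  simpa only [ofScalars_apply_eq, smul_eq_mul, zero_add] using hf.hasSum hz

theorem HasSum.mul_left_of_shift {R : Type*} [CommRing R] [TopologicalSpace R]
    [IsTopologicalRing R] {g : ℕ → R} {z S : R}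
    (h : HasSum (fun n => g (n + 1) * z ^ n) S) (hg : g 0 = 0) :
    HasSum (fun n => g n * z ^ n) (z * S) := by
  refine (hasSum_nat_add_iff' 1).mp ?_
  simp only [Finset.range_one, Finset.sum_singleton, hg, zero_mul, sub_zero]
  exact (h.mul_left z).congr_fun fun n => by ring

theorem gauss_equation_of_hasSum {R : Type*} [CommRing R] [TopologicalSpace R]
    [IsTopologicalRing R] [T2Space R] {a b c z F F' F'' : R} {q : ℕ → R}
    (hq : ∀ n : ℕ, (n + 1) * (n + c) * q (n + 1) = (n + a) * (n + b) * q n)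
    (hF : HasSum (fun n => q n * z ^ n) F)
    (hF' : HasSum (fun n => (n + 1) * q (n + 1) * z ^ n) F')
    (hF'' : HasSum (fun n => (n + 1) * (n + 2) * q (n + 2) * z ^ n) F'') :
    z * (1 - z) * F'' + (c - (a + b + 1) * z) * F' = a * b * F := by
  have hzF' : HasSum (fun n => n * q n * z ^ n) (z * F') :=
    HasSum.mul_left_of_shift (g := fun n => n * q n) (by simpa using hF') (by simp)
  have hzF'' : HasSum (fun n => n * (n + 1) * q (n + 1) * z ^ n) (z * F'') :=
    HasSum.mul_left_of_shift (g := fun n => n * (n + 1) * q (n + 1))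
      (hF''.congr_fun fun n => by push_cast; ring) (by simp)
  have hzzF'' : HasSum (fun n => (n - 1) * n * q n * z ^ n) (z * (z * F'')) :=
    HasSum.mul_left_of_shift (g := fun n => (n - 1) * n * q n)
      (hzF''.congr_fun fun n => by push_cast; ring) (by simp)
  have hlow : HasSum (fun n => (n + 1) * (n + c) * q (n + 1) * z ^ n) (z * F'' + c * F') :=
    (hzF''.add (hF'.mul_left c)).congr_fun fun n => by ring
  have hhigh : HasSum (fun n => (n + 1) * (n + c) * q (n + 1) * z ^ n)
      (z * (z * F'') + (a + b + 1) * (z * F') + a * b * F) :=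
    ((hzzF''.add (hzF'.mul_left (a + b + 1))).add (hF.mul_left (a * b))).congr_fun
      fun n => by rw [hq]; ring
  linear_combination hlow.unique hhigh

theorem one_le_radius_ordinaryHypergeometricSeries {𝕂 : Type*} (𝔸 : Type*) [RCLike 𝕂]
    [NormedDivisionRing 𝔸] [NormedAlgebra 𝕂 𝔸] (a b c : 𝕂) (hc : ∀ k : ℕ, c ≠ -k) :
    1 ≤ (ordinaryHypergeometricSeries 𝔸 a b c).radius := by
  by_cases ha : ∃ k : ℕ, a = -k
  · obtain ⟨k, rfl⟩ := ha
    simp [ordinaryHypergeometric_radius_top_of_neg_nat₁]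
  by_cases hb : ∃ k : ℕ, b = -k
  · obtain ⟨k, rfl⟩ := hb
    simp [ordinaryHypergeometric_radius_top_of_neg_nat₂]
  push Not at ha hb
  refine (ordinaryHypergeometricSeries_radius_eq_one 𝔸 a b c fun k => ?_).ge
  refine ⟨?_, ?_, ?_⟩ <;> intro h <;> simp_all [eq_neg_iff_add_eq_zero, add_comm]

theorem ordinaryHypergeometricCoefficient_succ {𝕂 : Type*} [Field 𝕂] [CharZero 𝕂] (a b c : 𝕂)
    (hc : ∀ k : ℕ, c ≠ -k) (n : ℕ) :
    (n + 1) * (n + c) * ordinaryHypergeometricCoefficient a b c (n + 1)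
      = (n + a) * (n + b) * ordinaryHypergeometricCoefficient a b c n := by
  have hcn : c + n ≠ 0 := fun h => hc n (eq_neg_of_add_eq_zero_left h)
  have hpc : (ascPochhammer 𝕂 n).eval c ≠ 0 := by
    rw [ne_eq, ascPochhammer_eval_eq_zero_iff]
    rintro ⟨k, -, hk⟩
    exact hc k (by rw [hk, neg_neg])
  simp only [ordinaryHypergeometricCoefficient, ascPochhammer_succ_eval, Nat.factorial_succ]
  push_cast
  field_simp
  ring

theorem hasFPowerSeriesOnBall_ordinaryHypergeometric {𝕂 : Type*} (𝔸 : Type*) [RCLike 𝕂]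
    [NormedDivisionRing 𝔸] [NormedAlgebra 𝕂 𝔸] [CompleteSpace 𝔸] (a b c : 𝕂)
    (hc : ∀ k : ℕ, c ≠ -k) :
    HasFPowerSeriesOnBall (₂F₁ a b c) (ordinaryHypergeometricSeries 𝔸 a b c) 0 1 := by
  have hr := one_le_radius_ordinaryHypergeometricSeries 𝔸 a b c hc
  exact (ordinaryHypergeometricSeries 𝔸 a b c).hasFPowerSeriesOnBall
    (zero_lt_one.trans_le hr) |>.mono one_pos hr

theorem ascFac_eq_ascPochhammer_eval (x : ℂ) (n : ℕ) : ascFac x n = (ascPochhammer ℂ n).eval x := by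
  induction n with
  | zero => simp [ascFac]
  | succ n ih => rw [ascFac, Finset.prod_range_succ, ← ascFac, ih, ascPochhammer_succ_eval]

theorem ordinaryHypergeometricCoefficient_mul_pow_eq_ascFac (a b c w : ℂ) (n : ℕ) :
    ordinaryHypergeometricCoefficient a b c n * w ^ n
      = ascFac a n * ascFac b n / ascFac c n * w ^ n / (n.factorial : ℂ) := by
  simp only [ascFac_eq_ascPochhammer_eval]
  ring

theorem ordinaryHypergeometric_eq_tsum_ascFac (a b c w : ℂ) :
    ₂F₁ a b c w = ∑' n : ℕ, ascFac a n * ascFac b n / ascFac c n * w ^ n / (n.factorial : ℂ) := by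
  rw [ordinaryHypergeometric, ordinaryHypergeometric_sum_eq]
  exact tsum_congr fun n => ordinaryHypergeometricCoefficient_mul_pow_eq_ascFac a b c w n

/-- the Gauss hypergeometric series
`F(z) = ∑ₙ ([a]_n[b]_n/[c]_n)·zⁿ/n!` converges on the open unit disk, defines a holomorphic
function there, and satisfies the Gauss hypergeometric differential equation
`F'' + ((c−(a+b+1)z)/(z(1−z)))·F' = (ab/(z(1−z)))·F` for `0 < |z| < 1`. -/
theorem gauss_hypergeometric_series_solves_gauss_equation
    (a b c : ℂ) (hc : ∀ m : ℕ, c ≠ -(m : ℂ)) :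
    (∀ z : ℂ, ‖z‖ < 1 →
      Summable fun n : ℕ => ascFac a n * ascFac b n / ascFac c n * z ^ n / (n.factorial : ℂ)) ∧
    (∀ z : ℂ, ‖z‖ < 1 → AnalyticAt ℂ
      (fun w : ℂ =>
        ∑' n : ℕ, ascFac a n * ascFac b n / ascFac c n * w ^ n / (n.factorial : ℂ)) z) ∧
    (∀ z : ℂ, 0 < ‖z‖ → ‖z‖ < 1 →
      deriv (deriv (fun w : ℂ =>
          ∑' n : ℕ, ascFac a n * ascFac b n / ascFac c n * w ^ n / (n.factorial : ℂ))) z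
        + (c - (a + b + 1) * z) / (z * (1 - z)) *
          deriv (fun w : ℂ =>
            ∑' n : ℕ, ascFac a n * ascFac b n / ascFac c n * w ^ n / (n.factorial : ℂ)) z
        = a * b / (z * (1 - z)) *
          ∑' n : ℕ, ascFac a n * ascFac b n / ascFac c n * z ^ n / (n.factorial : ℂ)) := by
  have hball {z : ℂ} (hz : ‖z‖ < 1) : z ∈ Metric.eball (0 : ℂ) 1 := by
    rwa [mem_eball_zero_iff, ← ofReal_norm, ENNReal.ofReal_lt_one]
  have hF : HasFPowerSeriesOnBall (₂F₁ a b c)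
      (ofScalars ℂ (ordinaryHypergeometricCoefficient a b c)) 0 1 :=
    hasFPowerSeriesOnBall_ordinaryHypergeometric ℂ a b c hc
  have hF' := hF.deriv_ofScalars
  have hF'' := hF'.deriv_ofScalars
  simp only [← ordinaryHypergeometric_eq_tsum_ascFac]
  refine ⟨fun z hz => ?_, fun z hz => hF.analyticAt_of_mem (hball hz), fun z hz0 hz1 => ?_⟩
  · simpa only [ordinaryHypergeometricCoefficient_mul_pow_eq_ascFac] using
      (hF.hasSum_ofScalars (hball hz)).summable
  · have hz : z ≠ 0 := norm_pos_iff.mp hz0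
    have hz' : 1 - z ≠ 0 := sub_ne_zero.mpr fun h => by simp [← h] at hz1
    have hequation := gauss_equation_of_hasSum (ordinaryHypergeometricCoefficient_succ a b c hc)
      (hF.hasSum_ofScalars (hball hz1)) (hF'.hasSum_ofScalars (hball hz1))
      ((hF''.hasSum_ofScalars (hball hz1)).congr_fun fun n => by push_cast; ring)
    field_simp
    linear_combination hequation
end

section
/- Let a ∈ ℂ and let b ∈ ℂ not be a nonpositive integer. The Kummer confluent hypergeometric series ₁F₁(a;b;z) = ∑_{n=0}^∞ ([a]_n/[b]_n) · zⁿ/n! converges for every z ∈ ℂ, so it defines an entire function f, and f satisfies z·f''(z) + (b − z)·f'(z) − a·f(z) = 0 for all z ∈ ℂ (this is the p = q = 1 case of the generalized hypergeometric differential equation; in particular the Kummer confluent function is analytic at every finite z). -/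
/-!
The coefficients `c n = [a]_n / ([b]_n n!)` satisfy `c (n+1) = (a+n) / ((b+n)(n+1)) · c n`.
The ratio tends to `0`, so `∑ c n zⁿ` converges absolutely at every radius and can be
differentiated termwise. Since `z f''` and `z f'` contribute `n(n+1) c (n+1)` and `n c n` to the
coefficient of `zⁿ`, the Kummer equation is, coefficientwise, the recurrence
`(b+n)(n+1) c (n+1) = (a+n) c n`.
-/

open Filter Topology

section PowerSeries

variable {𝕜 : Type*} [RCLike 𝕜]

def IsEntireSeries (c : ℕ → 𝕜) : Prop :=
  ∀ r : ℝ, 0 ≤ r → Summable fun n => ‖c n‖ * r ^ n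

def derivCoeff (c : ℕ → 𝕜) (n : ℕ) : 𝕜 := (n + 1) * c (n + 1)

theorem isEntireSeries_of_tendsto_ratio {c ρ : ℕ → 𝕜} (hρ : Tendsto ρ atTop (𝓝 0))
    (hc : ∀ n, c (n + 1) = ρ n * c n) : IsEntireSeries c := by
  intro r hr
  refine summable_of_ratio_norm_eventually_le (r := 1 / 2) (by norm_num) ?_
  have hsmall : ∀ᶠ n in atTop, ‖ρ n‖ * r ≤ 1 / 2 := by
    have : Tendsto (fun n => ‖ρ n‖ * r) atTop (𝓝 0) := by
      simpa using hρ.norm.mul_const r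
    exact this.eventually_le_const (by norm_num)
  filter_upwards [hsmall] with n hn
  have h0 : 0 ≤ ‖c n‖ * r ^ n := by positivity
  rw [Real.norm_of_nonneg (by positivity), Real.norm_of_nonneg h0, hc, norm_mul]
  calc ‖ρ n‖ * ‖c n‖ * r ^ (n + 1) = (‖ρ n‖ * r) * (‖c n‖ * r ^ n) := by ring
    _ ≤ 1 / 2 * (‖c n‖ * r ^ n) := mul_le_mul_of_nonneg_right hn h0

namespace IsEntireSeries

variable {c : ℕ → 𝕜}

theorem summable (hc : IsEntireSeries c) (z : 𝕜) : Summable fun n => c n * z ^ n :=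
  .of_norm_bounded (hc ‖z‖ (norm_nonneg z)) fun n => by rw [norm_mul, norm_pow]

theorem derivCoeff (hc : IsEntireSeries c) : IsEntireSeries (derivCoeff c) := by
  intro r hr
  have hbig : Summable fun n => ‖c (n + 1)‖ * (2 * (r + 1)) ^ (n + 1) :=
    (summable_nat_add_iff 1).mpr (hc (2 * (r + 1)) (by positivity))
  refine .of_nonneg_of_le (fun n => by positivity) (fun n => ?_) hbig
  have hn : (n : ℝ) + 1 ≤ 2 ^ (n + 1) := by exact_mod_cast (Nat.lt_two_pow_self (n := n + 1)).le
  have hr : r ^ n ≤ (r + 1) ^ (n + 1) :=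
    (pow_le_pow_left₀ hr (by linarith) n).trans (pow_le_pow_right₀ (by linarith) n.le_succ)
  rw [_root_.derivCoeff, norm_mul, mul_pow, show ‖(n : 𝕜) + 1‖ = (n : ℝ) + 1 by
    exact_mod_cast RCLike.norm_natCast (K := 𝕜) (n + 1)]
  calc (n + 1 : ℝ) * ‖c (n + 1)‖ * r ^ n = ‖c (n + 1)‖ * ((n + 1) * r ^ n) := by ring
    _ ≤ ‖c (n + 1)‖ * (2 ^ (n + 1) * (r + 1) ^ (n + 1)) := by gcongr

theorem hasDerivAt (hc : IsEntireSeries c) (z : 𝕜) :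
    HasDerivAt (fun w => ∑' n, c n * w ^ n) (∑' n, _root_.derivCoeff c n * z ^ n) z := by
  set R := ‖z‖ + 1
  have hz : z ∈ Metric.ball (0 : 𝕜) R := by simp [R]
  have hbound : Summable fun n => ‖c n‖ * (n * R ^ (n - 1)) := by
    refine (summable_nat_add_iff 1).mp ((hc.derivCoeff R (by positivity)).congr fun n => ?_)
    rw [_root_.derivCoeff, norm_mul, show ‖(n : 𝕜) + 1‖ = (n : ℝ) + 1 by
      exact_mod_cast RCLike.norm_natCast (K := 𝕜) (n + 1)]
    simp only [Nat.cast_add, Nat.cast_one, Nat.add_sub_cancel]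
    ring
  have hle : ∀ n, ∀ y ∈ Metric.ball (0 : 𝕜) R,
      ‖c n * ((n : 𝕜) * y ^ (n - 1))‖ ≤ ‖c n‖ * (n * R ^ (n - 1)) := fun n y hy => by
    rw [mem_ball_zero_iff] at hy
    rw [norm_mul, norm_mul, norm_pow, RCLike.norm_natCast]
    gcongr
  have hderiv := hasDerivAt_tsum_of_isPreconnected hbound Metric.isOpen_ball
    (convex_ball (0 : 𝕜) R).isPreconnected
    (fun n y _ => (hasDerivAt_pow n y).const_mul (c n)) hle hz (hc.summable z) hz
  have hsum : ∑' n, c n * ((n : 𝕜) * z ^ (n - 1)) = ∑' n, _root_.derivCoeff c n * z ^ n := by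
    rw [(Summable.of_norm_bounded hbound fun n => hle n z hz).tsum_eq_zero_add]
    simp only [_root_.derivCoeff, Nat.cast_zero, zero_mul, mul_zero, zero_add, Nat.cast_add,
      Nat.cast_one, Nat.add_sub_cancel]
    exact tsum_congr fun n => by ring
  exact hsum ▸ hderiv

theorem deriv_tsum_eq (hc : IsEntireSeries c) :
    deriv (fun w => ∑' n, c n * w ^ n) = fun z => ∑' n, _root_.derivCoeff c n * z ^ n :=
  funext fun z => (hc.hasDerivAt z).deriv

theorem differentiable (hc : IsEntireSeries c) : Differentiable 𝕜 fun w => ∑' n, c n * w ^ n :=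
  fun z => (hc.hasDerivAt z).differentiableAt

end IsEntireSeries

theorem HasSum.natCast_mul_of_derivCoeff {c : ℕ → 𝕜} {z S : 𝕜}
    (h : HasSum (fun n => derivCoeff c n * z ^ n) S) :
    HasSum (fun n => n * c n * z ^ n) (z * S) := by
  have hshift : (fun n => z * (derivCoeff c n * z ^ n))
      = fun n => ((n + 1 : ℕ) : 𝕜) * c (n + 1) * z ^ (n + 1) := by
    funext n
    simp only [derivCoeff, Nat.cast_add, Nat.cast_one]
    ring
  have := h.mul_left z
  rw [hshift] at this
  simpa using HasSum.zero_add (f := fun n => (n : 𝕜) * c n * z ^ n) this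

theorem IsEntireSeries.kummer_equation {c : ℕ → 𝕜} {a b : 𝕜} (hc : IsEntireSeries c)
    (hrec : ∀ n : ℕ, (b + n) * _root_.derivCoeff c n = (a + n) * c n) (z : 𝕜) :
    z * deriv (deriv fun w => ∑' n, c n * w ^ n) z
      + (b - z) * deriv (fun w => ∑' n, c n * w ^ n) z - a * ∑' n, c n * z ^ n = 0 := by
  rw [hc.deriv_tsum_eq, hc.derivCoeff.deriv_tsum_eq]
  have h0 := (hc.summable z).hasSum
  have h1 := (hc.derivCoeff.summable z).hasSum
  have h2 := (hc.derivCoeff.derivCoeff.summable z).hasSum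
  have H := (h2.natCast_mul_of_derivCoeff.add (h1.mul_left b)).sub
    (h1.natCast_mul_of_derivCoeff.add (h0.mul_left a))
  have hterm : ∀ n : ℕ, (n : 𝕜) * _root_.derivCoeff c n * z ^ n
      + b * (_root_.derivCoeff c n * z ^ n)
      - ((n : 𝕜) * c n * z ^ n + a * (c n * z ^ n)) = 0 := fun n => by
    linear_combination z ^ n * hrec n
  simp only [hterm] at H
  linear_combination H.unique hasSum_zero

end PowerSeries

noncomputable def kummerCoeff (a b : ℂ) (n : ℕ) : ℂ := ascFac a n / ascFac b n / n.factorial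

theorem ascFac_succ (x : ℂ) (n : ℕ) : ascFac x (n + 1) = ascFac x n * (x + n) :=
  Finset.prod_range_succ _ n

theorem add_natCast_ne_zero {b : ℂ} (hb : ∀ m : ℕ, b ≠ -m) (n : ℕ) : b + n ≠ 0 :=
  fun h => hb n (eq_neg_of_add_eq_zero_left h)

theorem ascFac_ne_zero {b : ℂ} (hb : ∀ m : ℕ, b ≠ -m) (n : ℕ) : ascFac b n ≠ 0 :=
  Finset.prod_ne_zero_iff.mpr fun k _ => add_natCast_ne_zero hb k

theorem kummerCoeff_succ (a : ℂ) {b : ℂ} (hb : ∀ m : ℕ, b ≠ -m) (n : ℕ) :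
    kummerCoeff a b (n + 1) = (a + n) / ((b + n) * (n + 1)) * kummerCoeff a b n := by
  have := add_natCast_ne_zero hb n
  have := ascFac_ne_zero hb n
  simp only [kummerCoeff, ascFac_succ, Nat.factorial_succ, Nat.cast_mul, Nat.cast_add,
    Nat.cast_one]
  field_simp

theorem tendsto_kummer_ratio (a b : ℂ) :
    Tendsto (fun n : ℕ => (a + n) / ((b + n) * (n + 1))) atTop (𝓝 0) := by
  have h := (tendsto_add_mul_div_add_mul_atTop_nhds a b 1 one_ne_zero).mul
    (tendsto_one_div_add_atTop_nhds_zero_nat (𝕜 := ℂ))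
  rw [mul_zero] at h
  refine h.congr fun n => ?_
  rw [one_mul, div_mul_div_comm, mul_one]

theorem isEntireSeries_kummerCoeff (a : ℂ) {b : ℂ} (hb : ∀ m : ℕ, b ≠ -m) :
    IsEntireSeries (kummerCoeff a b) :=
  isEntireSeries_of_tendsto_ratio (tendsto_kummer_ratio a b) (kummerCoeff_succ a hb)

theorem derivCoeff_kummerCoeff (a : ℂ) {b : ℂ} (hb : ∀ m : ℕ, b ≠ -m) (n : ℕ) :
    (b + n) * derivCoeff (kummerCoeff a b) n = (a + n) * kummerCoeff a b n := by
  have := add_natCast_ne_zero hb n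
  rw [derivCoeff, kummerCoeff_succ a hb]
  field_simp

/-- the Kummer confluent hypergeometric series
`₁F₁(a;b;z) = ∑ₙ ([a]_n/[b]_n)·zⁿ/n!` converges for every `z ∈ ℂ`, defines an entire
function `f`, and satisfies `z·f'' + (b−z)·f' − a·f = 0` everywhere. -/
theorem kummer_confluent_series_is_entire_and_solves_kummer_equation
    (a b : ℂ) (hb : ∀ m : ℕ, b ≠ -(m : ℂ)) :
    (∀ z : ℂ, Summable fun n : ℕ => ascFac a n / ascFac b n * z ^ n / (n.factorial : ℂ)) ∧
    Differentiable ℂ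
      (fun w : ℂ => ∑' n : ℕ, ascFac a n / ascFac b n * w ^ n / (n.factorial : ℂ)) ∧
    (∀ z : ℂ,
      z * deriv (deriv (fun w : ℂ =>
          ∑' n : ℕ, ascFac a n / ascFac b n * w ^ n / (n.factorial : ℂ))) z
        + (b - z) * deriv (fun w : ℂ =>
            ∑' n : ℕ, ascFac a n / ascFac b n * w ^ n / (n.factorial : ℂ)) z
        - a * ∑' n : ℕ, ascFac a n / ascFac b n * z ^ n / (n.factorial : ℂ) = 0) := by
  have hterm : ∀ w : ℂ, (fun n : ℕ => ascFac a n / ascFac b n * w ^ n / (n.factorial : ℂ))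
      = fun n => kummerCoeff a b n * w ^ n := fun w => funext fun n => by
    rw [kummerCoeff]; ring
  simp only [hterm]
  have hc := isEntireSeries_kummerCoeff a hb
  exact ⟨hc.summable, hc.differentiable, hc.kummer_equation (derivCoeff_kummerCoeff a hb)⟩
end
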